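/- arXiv:1611.02473 — 2 statements merged into one kernel-verified Lean document; each statement's English description precedes it below -/
import Mathlib

section
/- Assume the uniform exponential convergence ||P_μ(X_t ∈ · | t < τ∂) − α||_TV ≤ C e^{-γ t} for all probability measures μ on E and all t ≥ 0. Then there exists a constant a₁ > 0 such that |η_{t+s}(x)/η_t(x) − 1| ≤ a₁ e^{-γ t} for all x ∈ E and s, t ≥ 0, where η_t(x) = e^{λ₀ t} P_x(t < τ∂). -/
/-! Dividing the identity for `η (t + s)` by `η t x` and using `∫ η s dα = 1` turns
`η (t + s) x / η t x - 1` into `∫ η s d(L δₓ t) - ∫ η s dα`. A nonnegative function bounded by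
`M` has integrals against two measures that differ by at most `M · tv`, and the exponential
convergence bounds that total variation by `C e^{-γ t}`. -/

open MeasureTheory Real

/-- Total variation distance `‖μ − ν‖_TV = sup_A |μ(A) − ν(A)|`. -/
noncomputable def tv {E : Type*} [MeasurableSpace E] (μ ν : Measure E) : ℝ :=
  ⨆ s : {s : Set E // MeasurableSet s}, |(μ s.1).toReal - (ν s.1).toReal|

section TotalVariation

variable {E : Type*} [MeasurableSpace E] (μ ν : Measure E) [IsFiniteMeasure μ] [IsFiniteMeasure ν]

lemma bddAbove_tv_range :
    BddAbove (Set.range fun s : {s : Set E // MeasurableSet s} =>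
      |(μ s.1).toReal - (ν s.1).toReal|) := by
  refine ⟨μ.real .univ + ν.real .univ, ?_⟩
  rintro _ ⟨s, rfl⟩
  simp only [← measureReal_def]
  exact abs_sub_le_of_nonneg_of_le measureReal_nonneg
    ((measureReal_mono (Set.subset_univ _)).trans (le_add_of_nonneg_right measureReal_nonneg))
    measureReal_nonneg
    ((measureReal_mono (Set.subset_univ _)).trans (le_add_of_nonneg_left measureReal_nonneg))

lemma abs_measureReal_sub_le_tv {s : Set E} (hs : MeasurableSet s) :
    |μ.real s - ν.real s| ≤ tv μ ν :=
  le_ciSup (bddAbove_tv_range μ ν) (⟨s, hs⟩ : {s : Set E // MeasurableSet s})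

lemma integrableOn_measureReal_superlevel (f : E → ℝ) (M : ℝ) :
    IntegrableOn (fun t => μ.real {x | t ≤ f x}) (Set.Ioc 0 M) := by
  have hanti : Antitone fun t => μ.real {x | t ≤ f x} := fun _ _ hst =>
    measureReal_mono fun _ hx => hst.trans hx
  exact (hanti.locallyIntegrable.integrableOn_isCompact isCompact_Icc).mono_set
    Set.Ioc_subset_Icc_self

/-- Layer cake: both integrals are integrals over `t ∈ (0, M]` of the measures of the
superlevel sets `{t ≤ f}`, which differ by at most `tv μ ν`. -/
lemma abs_integral_sub_le_mul_tv {f : E → ℝ} (hf : Measurable f) {M : ℝ}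
    (hM : 0 ≤ M) (hf_nonneg : ∀ x, 0 ≤ f x) (hf_le : ∀ x, f x ≤ M) :
    |∫ x, f x ∂μ - ∫ x, f x ∂ν| ≤ M * tv μ ν := by
  have hf_int : ∀ (ρ : Measure E) [IsFiniteMeasure ρ], Integrable f ρ := fun ρ _ =>
    .of_bound hf.aestronglyMeasurable M (ae_of_all _ fun x => by
      rw [Real.norm_of_nonneg (hf_nonneg x)]; exact hf_le x)
  rw [(hf_int μ).integral_eq_integral_Ioc_meas_le (ae_of_all _ hf_nonneg) (ae_of_all _ hf_le),
    (hf_int ν).integral_eq_integral_Ioc_meas_le (ae_of_all _ hf_nonneg) (ae_of_all _ hf_le),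
    ← integral_sub (integrableOn_measureReal_superlevel μ f M)
      (integrableOn_measureReal_superlevel ν f M), ← Real.norm_eq_abs]
  calc _ ≤ tv μ ν * volume.real (Set.Ioc 0 M) :=
        norm_setIntegral_le_of_norm_le_const measure_Ioc_lt_top fun t _ =>
          abs_measureReal_sub_le_tv μ ν (hf measurableSet_Ici)
    _ = M * tv μ ν := by simp [hM, mul_comm]

end TotalVariation

theorem ratio_eta_close_to_one_general {E : Type*} [MeasurableSpace E]
    (L : Measure E → ℝ → Measure E)  -- L μ t = P_μ(X_t ∈ · ∣ t < τ∂)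
    (α : Measure E) [IsProbabilityMeasure α]
    (η : ℝ → E → ℝ) (C γ : ℝ) (hC : 0 < C)
    (hLprob : ∀ (μ : Measure E) t, IsProbabilityMeasure μ → 0 ≤ t →
      IsProbabilityMeasure (L μ t))
    -- uniform exponential convergence in total variation
    (hconv : ∀ (μ : Measure E) t, IsProbabilityMeasure μ → 0 ≤ t →
      tv (L μ t) α ≤ C * exp (-γ * t))
    (hmeas : ∀ s, Measurable (η s))
    (hbdd : ∃ M, ∀ s x, 0 ≤ s → |η s x| ≤ M)
    (hηpos : ∀ t x, 0 ≤ t → 0 < η t x)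
    (hα1 : ∀ s, 0 ≤ s → ∫ x, η s x ∂α = 1)
    -- η_{t+s}(x) = η_t(x) E_x(η_s(X_t) ∣ t < τ∂)
    (hident : ∀ s t x, 0 ≤ s → 0 ≤ t →
       η (t + s) x = η t x * ∫ y, η s y ∂(L (Measure.dirac x) t)) :
    ∃ a₁ > 0, ∀ x s t, 0 ≤ s → 0 ≤ t →
      |η (t + s) x / η t x - 1| ≤ a₁ * exp (-γ * t) := by
  obtain ⟨M, hM⟩ := hbdd
  refine ⟨max M 1 * C, by positivity, fun x s t hs ht => ?_⟩
  have := hLprob (Measure.dirac x) t inferInstance ht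
  have hη_le : ∀ y, η s y ≤ max M 1 := fun y =>
    (le_abs_self _).trans ((hM s y hs).trans (le_max_left _ _))
  calc |η (t + s) x / η t x - 1|
      = |∫ y, η s y ∂(L (Measure.dirac x) t) - ∫ y, η s y ∂α| := by
        rw [hident s t x hs ht, hα1 s hs, mul_div_cancel_left₀ _ (hηpos t x ht).ne']
    _ ≤ max M 1 * tv (L (Measure.dirac x) t) α :=
        abs_integral_sub_le_mul_tv _ _ (hmeas s) (by positivity) (fun y => (hηpos s y hs).le)
          hη_le
    _ ≤ max M 1 * (C * exp (-γ * t)) := by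
        gcongr
        exact hconv _ t inferInstance ht
    _ = max M 1 * C * exp (-γ * t) := by ring

/-- under the uniform exponential convergence
`‖P_μ(X_t ∈ · ∣ t<τ∂) − α‖_TV ≤ C e^{-γ t}`, there is `a₁ > 0` with
`|η_{t+s}(x)/η_t(x) − 1| ≤ a₁ e^{-γ t}` for all `x ∈ E`, `s, t ≥ 0`.
Here `L μ t = P_μ(X_t ∈ · ∣ t < τ∂)` and `η t x = e^{λ₀ t} P_x(t < τ∂)`, which satisfies the
identity `η_{t+s}(x) = η_t(x) E_x(η_s(X_t) ∣ t<τ∂)`, is uniformly bounded, and `∫ η_s dα = 1`. -/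
theorem ratio_eta_close_to_one {E : Type*} [MeasurableSpace E]
    (L : Measure E → ℝ → Measure E)  -- L μ t = P_μ(X_t ∈ · ∣ t < τ∂)
    (α : Measure E) [IsProbabilityMeasure α]
    (η : ℝ → E → ℝ) (C γ : ℝ) (hC : 0 < C) (hγ : 0 < γ)
    (hLprob : ∀ (μ : Measure E) t, IsProbabilityMeasure μ → 0 ≤ t →
      IsProbabilityMeasure (L μ t))
    -- uniform exponential convergence in total variation
    (hconv : ∀ (μ : Measure E) t, IsProbabilityMeasure μ → 0 ≤ t →
      tv (L μ t) α ≤ C * exp (-γ * t))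
    (hmeas : ∀ s, Measurable (η s))
    (hbdd : ∃ M, ∀ s x, 0 ≤ s → |η s x| ≤ M)
    (hηpos : ∀ t x, 0 ≤ t → 0 < η t x)
    (hα1 : ∀ s, 0 ≤ s → ∫ x, η s x ∂α = 1)
    -- η_{t+s}(x) = η_t(x) E_x(η_s(X_t) ∣ t < τ∂)
    (hident : ∀ s t x, 0 ≤ s → 0 ≤ t →
       η (t + s) x = η t x * ∫ y, η s y ∂(L (Measure.dirac x) t)) :
    ∃ a₁ > 0, ∀ x s t, 0 ≤ s → 0 ≤ t →
      |η (t + s) x / η t x - 1| ≤ a₁ * exp (-γ * t) :=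
  ratio_eta_close_to_one_general L α η C γ hC hLprob hconv hmeas hbdd hηpos hα1 hident
end

section
/- Under uniform exponential convergence to the quasi-stationary distribution with rate γ, there exists a₂ > 0 such that for all x ∈ E, all t ≥ 0, all Γ ∈ F_t and all T ≥ t, |Q_x(Γ) − P_x(Γ | T < τ∂)| ≤ a₂ e^{-γ(T−t)}, where Q_x(Γ) = e^{λ₀ t} E_x(1_Γ η(X_t))/η(x) is the law of the Q-process. -/
open MeasureTheory Real

private lemma quotient_bound {N N' D D' u ε : ℝ} (hN : 0 ≤ N) (hND : N ≤ D) (hD : 0 < D)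
    (hN' : 0 ≤ N') (hND' : N' ≤ D') (hD' : 0 < D') (hu : 0 < u) (hε : 0 < ε)
    (h1 : |N - u * N'| ≤ ε * N) (h2 : |D - u * D'| ≤ ε * D) :
    |N' / D' - N / D| ≤ 4 * ε := by
  rcases le_or_gt ε (1/2) with hc | hc
  · have h2' := abs_le.mp h2
    have huD' : (1 - ε) * D ≤ u * D' := by nlinarith [h2'.1]
    have hnum : |u * N' * D - N * (u * D')| ≤ 2 * ε * D * D := by
      have he : u * N' * D - N * (u * D') = (u * N' - N) * D + N * (D - u * D') := by ring
      rw [he]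
      have e1 : |u * N' - N| ≤ ε * N := by rw [abs_sub_comm]; exact h1
      calc |(u * N' - N) * D + N * (D - u * D')|
          ≤ |(u * N' - N) * D| + |N * (D - u * D')| := abs_add_le _ _
        _ = |u * N' - N| * D + N * |D - u * D'| := by
            rw [abs_mul, abs_mul, abs_of_pos hD, abs_of_nonneg hN]
        _ ≤ (ε * N) * D + N * (ε * D) := by
            have k1 := mul_le_mul_of_nonneg_right e1 hD.le
            have k2 := mul_le_mul_of_nonneg_left h2 hN
            linarith
        _ ≤ 2 * ε * D * D := by nlinarith
    have hden : D * D / 2 ≤ u * D' * D := by nlinarith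
    have heq : N' / D' - N / D = (u * N' * D - N * (u * D')) / (u * D' * D) := by
      field_simp
    rw [heq, abs_div, abs_of_pos (show (0:ℝ) < u * D' * D by positivity),
      div_le_iff₀ (by positivity)]
    nlinarith [hnum, mul_nonneg hε.le (sub_nonneg.mpr hden)]
  · have hQ1 : N' / D' ≤ 1 := (div_le_one hD').mpr hND'
    have hQ0 : 0 ≤ N' / D' := div_nonneg hN' hD'.le
    have hP1 : N / D ≤ 1 := (div_le_one hD).mpr hND
    have hP0 : 0 ≤ N / D := div_nonneg hN hD.le
    rw [abs_le]
    constructor <;> nlinarith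

/-- under uniform exponential convergence to the QSD (through its consequences: the
eigenfunction property of `η`, the Markov property, and the error bound
`|e^{λ₀ T} P_x(T<τ∂) − η(x)| ≤ a₁ e^{-γ T} e^{λ₀ T} P_x(T<τ∂)`), there exists `a₂ > 0` such that
for all `x ∈ E`, `0 ≤ t ≤ T` and `Γ ∈ F_t`,
`|Q_x(Γ) − P_x(Γ ∣ T < τ∂)| ≤ a₂ e^{-γ(T−t)}`, where
`Q_x(Γ) = e^{λ₀ t} E_x(1_Γ η(X_t))/η(x)` (with `η` vanishing at the cemetery point, i.e.
the expectation is restricted to `{t < τ∂}`). -/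
theorem Q_process_uniform_convergence {E Ω : Type*} [MeasurableSpace E] [mΩ : MeasurableSpace Ω]
    (ℙ : E → Measure Ω) (X : ℝ → Ω → E) (τ : Ω → ℝ) (η : E → ℝ)
    (F : ℝ → MeasurableSpace Ω) (hF : ∀ t, F t ≤ mΩ)
    (lam0 a₁ γ : ℝ) (ha₁ : 0 < a₁) (hγ : 0 < γ)
    (hprob : ∀ x, IsProbabilityMeasure (ℙ x))
    (hηmeas : Measurable η) (hXmeas : ∀ t, Measurable (X t)) (hτmeas : Measurable τ)
    (hηpos : ∀ x, 0 < η x)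
    (hsurvpos : ∀ (x : E) (T : ℝ), 0 ≤ T → 0 < ((ℙ x) {ω | T < τ ω}).toReal)
    (hinteg : ∀ x t, Integrable (fun ω => η (X t ω)) (ℙ x))
    (hsurvmeas : ∀ S : ℝ, Measurable (fun y => ((ℙ y) {ω | S < τ ω}).toReal))
    -- eigenfunction property: E_x(η(X_t) 1_{t<τ∂}) = e^{-λ₀ t} η(x)
    (heigen : ∀ x t, 0 ≤ t →
      ∫ ω in {ω | t < τ ω}, η (X t ω) ∂(ℙ x) = exp (-lam0 * t) * η x)
    -- Markov property: P_x(Γ ∩ {T<τ∂}) = E_x(1_{Γ ∩ {t<τ∂}} P_{X_t}(T−t < τ∂))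
    (hmarkov : ∀ (x : E) (t T : ℝ) (Γ : Set Ω), 0 ≤ t → t ≤ T → MeasurableSet[F t] Γ →
      ((ℙ x) (Γ ∩ {ω | T < τ ω})).toReal
        = ∫ ω in Γ ∩ {ω | t < τ ω}, ((ℙ (X t ω)) {ω' | T - t < τ ω'}).toReal ∂(ℙ x))
    -- error bound (consequence of uniform exponential convergence)
    (hbound : ∀ (x : E) (T : ℝ), 0 ≤ T →
      |exp (lam0 * T) * ((ℙ x) {ω | T < τ ω}).toReal - η x|
        ≤ a₁ * exp (-γ * T) * (exp (lam0 * T) * ((ℙ x) {ω | T < τ ω}).toReal)) :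
    ∃ a₂ > 0, ∀ (x : E) (t T : ℝ) (Γ : Set Ω), 0 ≤ t → t ≤ T → MeasurableSet[F t] Γ →
      |exp (lam0 * t) * (∫ ω in Γ ∩ {ω | t < τ ω}, η (X t ω) ∂(ℙ x)) / η x
          - ((ℙ x) (Γ ∩ {ω | T < τ ω})).toReal / ((ℙ x) {ω | T < τ ω}).toReal|
        ≤ a₂ * exp (-γ * (T - t)) := by
  refine ⟨4 * a₁, by positivity, ?_⟩
  intro x t T Γ ht htT hΓ
  have hT : 0 ≤ T := le_trans ht htT
  set s := T - t with hs
  have hs0 : 0 ≤ s := by rw [hs]; linarith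
  set ε := a₁ * exp (-γ * s) with hε
  have hε0 : 0 < ε := by positivity
  set u := exp (-lam0 * s) with hu
  have hu0 : 0 < u := exp_pos _
  have hue : u * exp (lam0 * s) = 1 := by
    rw [hu, ← exp_add, neg_mul, neg_add_cancel, exp_zero]
  have hΓm : MeasurableSet Γ := hF t Γ hΓ
  have hτset : MeasurableSet {ω | t < τ ω} := measurableSet_lt measurable_const hτmeas
  have hNm : MeasurableSet (Γ ∩ {ω | t < τ ω}) := hΓm.inter hτset
  haveI := hprob x
  -- survival probability function from time t
  set p : Ω → ℝ := fun ω => ((ℙ (X t ω)) {ω' | s < τ ω'}).toReal with hp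
  have hpmeas : Measurable p := (hsurvmeas s).comp (hXmeas t)
  have hpnonneg : ∀ ω, 0 ≤ p ω := fun ω => ENNReal.toReal_nonneg
  have hple : ∀ ω, 0 ≤ p ω ∧ p ω ≤ 1 := by
    intro ω
    refine ⟨hpnonneg ω, ?_⟩
    haveI := hprob (X t ω)
    rw [hp]
    simp only
    rw [← ENNReal.toReal_one]
    exact ENNReal.toReal_mono ENNReal.one_ne_top prob_le_one
  have hpint : Integrable p (ℙ x) := by
    refine Integrable.mono' (integrable_const 1) hpmeas.aestronglyMeasurable ?_
    filter_upwards with ω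
    rw [Real.norm_eq_abs, abs_of_nonneg (hpnonneg ω)]
    exact (hple ω).2
  have hηint : Integrable (fun ω => η (X t ω)) (ℙ x) := hinteg x t
  -- integral comparison on any measurable set
  have hdiff : ∀ A : Set Ω, MeasurableSet A →
      |(∫ ω in A, p ω ∂(ℙ x)) - u * ∫ ω in A, η (X t ω) ∂(ℙ x)|
        ≤ ε * ∫ ω in A, p ω ∂(ℙ x) := by
    intro A hA
    have hint1 : Integrable (fun ω => p ω) ((ℙ x).restrict A) := hpint.restrict
    have hint2 : Integrable (fun ω => u * η (X t ω)) ((ℙ x).restrict A) :=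
      (hηint.const_mul u).restrict
    have h1 : (∫ ω in A, p ω ∂(ℙ x)) - u * ∫ ω in A, η (X t ω) ∂(ℙ x)
        = ∫ ω in A, (p ω - u * η (X t ω)) ∂(ℙ x) := by
      rw [integral_sub hint1 hint2, integral_const_mul]
    rw [h1]
    have hkey : ∀ ω, |p ω - u * η (X t ω)| ≤ ε * p ω := by
      intro ω
      have h := hbound (X t ω) s hs0
      have he' : p ω - u * η (X t ω)
          = u * (exp (lam0 * s) * p ω - η (X t ω)) := by
        rw [mul_sub, ← mul_assoc, hue, one_mul]
      rw [he', abs_mul, abs_of_pos hu0]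
      calc u * |exp (lam0 * s) * p ω - η (X t ω)|
          ≤ u * (a₁ * exp (-γ * s) * (exp (lam0 * s) * p ω)) :=
            mul_le_mul_of_nonneg_left h hu0.le
        _ = a₁ * exp (-γ * s) * ((u * exp (lam0 * s)) * p ω) := by ring
        _ = ε * p ω := by rw [hue, hε]; ring
    calc |∫ ω in A, (p ω - u * η (X t ω)) ∂(ℙ x)|
        ≤ ∫ ω in A, |p ω - u * η (X t ω)| ∂(ℙ x) := by
          simpa [Real.norm_eq_abs] using
            norm_integral_le_integral_norm (μ := (ℙ x).restrict A)
              (fun ω => p ω - u * η (X t ω))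
      _ ≤ ∫ ω in A, ε * p ω ∂(ℙ x) := by
          refine integral_mono (hint1.sub hint2).abs (hint1.const_mul ε) ?_
          intro ω; exact hkey ω
      _ = ε * ∫ ω in A, p ω ∂(ℙ x) := integral_const_mul _ _
  -- identify N and D via the Markov property
  have hN : ((ℙ x) (Γ ∩ {ω | T < τ ω})).toReal
      = ∫ ω in Γ ∩ {ω | t < τ ω}, p ω ∂(ℙ x) := by
    have h := hmarkov x t T Γ ht htT hΓ
    rw [← hs] at h
    exact h
  have hD : ((ℙ x) {ω | T < τ ω}).toReal = ∫ ω in {ω | t < τ ω}, p ω ∂(ℙ x) := by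
    have h := hmarkov x t T Set.univ ht htT MeasurableSet.univ
    rw [← hs] at h
    simp only [Set.univ_inter] at h
    exact h
  have hD'eq : ∫ ω in {ω | t < τ ω}, η (X t ω) ∂(ℙ x) = exp (-lam0 * t) * η x :=
    heigen x t ht
  -- quantities
  have hDpos : 0 < ((ℙ x) {ω | T < τ ω}).toReal := hsurvpos x T hT
  have hNnn : 0 ≤ ((ℙ x) (Γ ∩ {ω | T < τ ω})).toReal := ENNReal.toReal_nonneg
  have hNleD : ((ℙ x) (Γ ∩ {ω | T < τ ω})).toReal ≤ ((ℙ x) {ω | T < τ ω}).toReal :=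
    ENNReal.toReal_mono (measure_ne_top _ _) (measure_mono Set.inter_subset_right)
  have hN'nn : 0 ≤ ∫ ω in Γ ∩ {ω | t < τ ω}, η (X t ω) ∂(ℙ x) :=
    setIntegral_nonneg hNm (fun ω _ => (hηpos _).le)
  have hN'leD' : (∫ ω in Γ ∩ {ω | t < τ ω}, η (X t ω) ∂(ℙ x))
      ≤ exp (-lam0 * t) * η x := by
    rw [← hD'eq]
    exact setIntegral_mono_set hηint.integrableOn
      (Filter.Eventually.of_forall fun ω => (hηpos _).le)
      (HasSubset.Subset.eventuallyLE Set.inter_subset_right)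
  have hD'pos : 0 < exp (-lam0 * t) * η x := mul_pos (exp_pos _) (hηpos x)
  -- rewrite Q as N'/D'
  have hQ : exp (lam0 * t) * (∫ ω in Γ ∩ {ω | t < τ ω}, η (X t ω) ∂(ℙ x)) / η x
      = (∫ ω in Γ ∩ {ω | t < τ ω}, η (X t ω) ∂(ℙ x)) / (exp (-lam0 * t) * η x) := by
    rw [div_eq_div_iff (hηpos x).ne' hD'pos.ne']
    have het : exp (-lam0 * t) * exp (lam0 * t) = 1 := by
      rw [← exp_add, neg_mul, neg_add_cancel, exp_zero]
    linear_combination (∫ ω in Γ ∩ {ω | t < τ ω}, η (X t ω) ∂(ℙ x)) * η x * het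
  rw [hQ]
  have h1 : |((ℙ x) (Γ ∩ {ω | T < τ ω})).toReal
      - u * ∫ ω in Γ ∩ {ω | t < τ ω}, η (X t ω) ∂(ℙ x)|
      ≤ ε * ((ℙ x) (Γ ∩ {ω | T < τ ω})).toReal := by
    rw [hN]; exact hdiff _ hNm
  have h2 : |((ℙ x) {ω | T < τ ω}).toReal - u * (exp (-lam0 * t) * η x)|
      ≤ ε * ((ℙ x) {ω | T < τ ω}).toReal := by
    rw [hD, ← hD'eq]; exact hdiff _ hτset
  have main := quotient_bound hNnn hNleD hDpos hN'nn hN'leD' hD'pos hu0 hε0 h1 h2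
  calc |(∫ ω in Γ ∩ {ω | t < τ ω}, η (X t ω) ∂(ℙ x)) / (exp (-lam0 * t) * η x)
      - ((ℙ x) (Γ ∩ {ω | T < τ ω})).toReal / ((ℙ x) {ω | T < τ ω}).toReal|
      ≤ 4 * ε := main
    _ = 4 * a₁ * exp (-γ * s) := by rw [hε]; ring
end
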